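/- Suppose D follows Data Model 1, fix p ≥ 1, and let d_i = S·α_i + U̇_{k_i}·β_i be a column of D with β_i ≠ 0. Define d_i^⊥ = U̇_{k_i}β_i / ‖β_i‖₂². Then d_iᵀ d_i^⊥ = 1, and ‖D_{−k_i}ᵀ d_i^⊥‖_p^p ≤ (m−1) · (1/‖β_i‖₂^p) · φ^p · Δ̇_max. -/
import Mathlib


open Matrix Finset MeasureTheory ProbabilityTheory

noncomputable section

namespace Paper

instance {m n α : Type*} [MeasurableSpace α] : MeasurableSpace (Matrix m n α) :=
  MeasurableSpace.pi

/-- Euclidean (`ℓ₂`) norm of a vector. -/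
def enorm {ι : Type*} [Fintype ι] (v : ι → ℝ) : ℝ := Real.sqrt (∑ i, v i ^ 2)

/-- `ℓ_p` norm of a vector. -/
def pnorm {ι : Type*} [Fintype ι] (p : ℝ) (v : ι → ℝ) : ℝ := (∑ i, |v i| ^ p) ^ (1 / p)

/-- Spectral norm (largest singular value) of a real matrix. -/
def spec {a b : Type*} [Fintype a] [Fintype b] (M : Matrix a b ℝ) : ℝ :=
  ⨆ v : { v : b → ℝ // enorm v = 1 }, enorm (M.mulVec v.1)

/-- Smallest singular value of a real matrix. -/
def smin {a b : Type*} [Fintype a] [Fintype b] (M : Matrix a b ℝ) : ℝ :=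
  ⨅ v : { v : b → ℝ // enorm v = 1 }, enorm (M.mulVec v.1)

/-- Column space (span of the columns) of a matrix. -/
def colSpan {a b : Type*} (M : Matrix a b ℝ) : Submodule ℝ (a → ℝ) :=
  Submodule.span ℝ (Set.range Mᵀ)

/-- Requirement 1 with parameters `κ` and `p`; the columns of the data matrix are indexed by
`Fin m × Fin n`, the first coordinate being the cluster index. -/
def Req1 {m n : ℕ} (A : Matrix (Fin m × Fin n) (Fin m × Fin n) ℝ) (κ p : ℝ) : Prop :=
  ∀ i : Fin m × Fin n,
    κ / ((m : ℝ) - 1) * ∑ j ∈ univ.filter (fun j : Fin m × Fin n => j.1 ≠ i.1), |A j i| ^ p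
      < ∑ j ∈ univ.filter (fun j : Fin m × Fin n => j.1 = i.1), |A j i| ^ p

/-- Feasibility for the direction-search problem: `cᵢᵀ dᵢ = 1` for every column. -/
def Feasible {a ι : Type*} [Fintype a] [Fintype ι] (D C : Matrix a ι ℝ) : Prop :=
  ∀ i, dotProduct (Cᵀ i) (Dᵀ i) = 1

/-- Optimal point of `min_C ∑ᵢ ‖Dᵀ cᵢ‖_p  s.t.  cᵢᵀ dᵢ = 1`. -/
def IsOptimal {a ι : Type*} [Fintype a] [Fintype ι] (p : ℝ) (D C : Matrix a ι ℝ) : Prop :=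
  Feasible D C ∧ ∀ C' : Matrix a ι ℝ, Feasible D C' →
    ∑ i, pnorm p (Dᵀ.mulVec (Cᵀ i)) ≤ ∑ i, pnorm p (Dᵀ.mulVec (C'ᵀ i))

/-- Optimal point of `min_C ∑ᵢ ‖Dᵀ cᵢ‖₂  s.t.  cᵢᵀ dᵢ = 1`. -/
def IsOptimal2 {a ι : Type*} [Fintype a] [Fintype ι] (D C : Matrix a ι ℝ) : Prop :=
  Feasible D C ∧ ∀ C' : Matrix a ι ℝ, Feasible D C' →
    ∑ i, enorm (Dᵀ.mulVec (Cᵀ i)) ≤ ∑ i, enorm (Dᵀ.mulVec (C'ᵀ i))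

/-- The adjacency matrix `A = |Dᵀ C|`. -/
def adjacency {a ι : Type*} [Fintype a] [Fintype ι] (D C : Matrix a ι ℝ) : Matrix ι ι ℝ :=
  Matrix.of fun j i => |(Dᵀ * C) j i|

/-- `Δ_min`: the permeance statistic of the clusters. -/
def Dmin {M₁ m n s rs : ℕ} (D : Matrix (Fin M₁) (Fin m × Fin n) ℝ)
    (Smat : Matrix (Fin M₁) (Fin s) ℝ) (Ud : Fin m → Matrix (Fin M₁) (Fin rs) ℝ)
    (p : ℝ) : ℝ :=
  ⨅ j : Fin m, ⨅ u : { u : Fin M₁ → ℝ // u ∈ colSpan Smat ⊔ colSpan (Ud j) ∧ enorm u = 1 },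
    ∑ t : Fin n, |dotProduct u.1 (Dᵀ (j, t))| ^ p

/-- `Δ̇_max`. -/
def Ddotmax {M₁ m n rs : ℕ} (D : Matrix (Fin M₁) (Fin m × Fin n) ℝ)
    (Ud : Fin m → Matrix (Fin M₁) (Fin rs) ℝ) (p : ℝ) : ℝ :=
  ⨆ j : Fin m, ⨆ u : { u : Fin rs → ℝ // enorm u = 1 },
    ∑ t : Fin n, |dotProduct u.1 ((Ud j)ᵀ.mulVec (Dᵀ (j, t)))| ^ p

/-- `Δ̄_max`. -/
def Dbarmax {M₁ m n s : ℕ} (D : Matrix (Fin M₁) (Fin m × Fin n) ℝ)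
    (Smat : Matrix (Fin M₁) (Fin s) ℝ) (p : ℝ) : ℝ :=
  ⨆ j : Fin m, ⨆ u : { u : Fin s → ℝ // enorm u = 1 },
    ∑ t : Fin n, |dotProduct u.1 (Smatᵀ.mulVec (Dᵀ (j, t)))| ^ p

/-- `φ = max_{j ≠ t} ‖U̇ₜᵀ U̇ⱼ‖`. -/
def phi {M₁ m rs : ℕ} (Ud : Fin m → Matrix (Fin M₁) (Fin rs) ℝ) : ℝ :=
  ⨆ j : Fin m, ⨆ t : Fin m, if j ≠ t then spec ((Ud t)ᵀ * Ud j) else 0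

/-- `z_{δ,x}`. -/
def zd (m n : ℕ) (δ x : ℝ) : ℝ :=
  1 + 2 * Real.sqrt (1 / x * Real.log (2 * n * m / δ)) + 2 / x * Real.log (2 * n * m / δ)

/-- `η_{δ,x}`. -/
def etad (m n : ℕ) (δ x : ℝ) : ℝ :=
  max (4 * zd m n δ x / 3 * Real.log (2 * x * m / δ))
    (Real.sqrt (4 * n * (x + 3) / x ^ 2 * Real.log (2 * x * m / δ)))

/-- `σ_l(x/y, δ)`. -/
def sigl (M₂ : ℕ) (δ x y : ℝ) : ℝ :=
  (x - 2 * Real.sqrt (x * Real.log (2 * M₂ / δ))) /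
    (y + 2 * Real.sqrt ((y - x) * Real.log (2 * M₂ / δ)) + 2 * Real.log (2 * M₂ / δ)
      - 2 * Real.sqrt (x * Real.log (2 * M₂ / δ)))

/-- `σ_u(x/y, δ)`. -/
def sigu (M₂ : ℕ) (δ x y : ℝ) : ℝ :=
  (x + 2 * Real.sqrt (x * Real.log (2 * M₂ / δ)) + 2 * Real.log (2 * M₂ / δ)) /
    (y + 2 * Real.sqrt (x * Real.log (2 * M₂ / δ)) + 2 * Real.log (2 * M₂ / δ)
      - 2 * Real.sqrt ((y - x) * Real.log (2 * M₂ / δ)))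

/-- `c_δ` of Theorems 3 and 8. -/
def cdel (M₁ m r s : ℕ) (δ : ℝ) : ℝ :=
  3 * max 1 (max (Real.sqrt (8 * M₁ * Real.pi / (((M₁ : ℝ) - 1) * ((r : ℝ) - s))))
    (Real.sqrt (16 * M₁ * Real.log (m * r / δ) / (((M₁ : ℝ) - 1) * ((r : ℝ) - s)))))



section AuxStmt12

lemma enorm_nonneg' {ι : Type*} [Fintype ι] (v : ι → ℝ) : 0 ≤ enorm v := Real.sqrt_nonneg _

lemma enorm_sq {ι : Type*} [Fintype ι] (v : ι → ℝ) : enorm v ^ 2 = ∑ i, v i ^ 2 :=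
  Real.sq_sqrt (Finset.sum_nonneg fun _ _ => sq_nonneg _)

lemma enorm_pos {ι : Type*} [Fintype ι] {v : ι → ℝ} (h : v ≠ 0) : 0 < enorm v := by
  obtain ⟨i, hi⟩ : ∃ i, v i ≠ 0 := by
    by_contra hc; push_neg at hc; exact h (funext hc)
  unfold enorm
  apply Real.sqrt_pos.mpr
  calc (0:ℝ) < v i ^ 2 := by positivity
    _ ≤ ∑ j, v j ^ 2 :=
      Finset.single_le_sum (f := fun j => v j ^ 2) (fun j _ => sq_nonneg _) (mem_univ i)

lemma enorm_smul {ι : Type*} [Fintype ι] {c : ℝ} (hc : 0 ≤ c) (v : ι → ℝ) :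
    enorm (c • v) = c * enorm v := by
  unfold enorm
  have h : ∀ i ∈ (univ : Finset ι), (c • v) i ^ 2 = c ^ 2 * v i ^ 2 := fun i _ => by
    simp [mul_pow]
  rw [Finset.sum_congr rfl h, ← Finset.mul_sum, Real.sqrt_mul (sq_nonneg c),
    Real.sqrt_sq hc]

lemma abs_dot_le {ι : Type*} [Fintype ι] (u v : ι → ℝ) : |u ⬝ᵥ v| ≤ enorm u * enorm v := by
  unfold enorm
  rw [← Real.sqrt_mul (Finset.sum_nonneg fun _ _ => sq_nonneg _), ← Real.sqrt_sq_eq_abs]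
  exact Real.sqrt_le_sqrt (by simpa [dotProduct] using
    Finset.sum_mul_sq_le_sq_mul_sq univ u v)

lemma le_spec {a b : Type*} [Fintype a] [Fintype b] (M : Matrix a b ℝ) {v : b → ℝ}
    (hv : enorm v = 1) : enorm (M *ᵥ v) ≤ spec M := by
  have hbd : ∀ w : {w : b → ℝ // enorm w = 1},
      enorm (M *ᵥ w.1) ≤ Real.sqrt (∑ i, ∑ j, M i j ^ 2) := by
    rintro ⟨w, hw⟩
    unfold enorm
    apply Real.sqrt_le_sqrt
    apply Finset.sum_le_sum
    intro i _
    have h1 : |(M *ᵥ w) i| ≤ enorm (fun j => M i j) * enorm w := abs_dot_le _ w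
    calc (M *ᵥ w) i ^ 2 = |(M *ᵥ w) i| ^ 2 := (sq_abs _).symm
      _ ≤ (enorm (fun j => M i j)) ^ 2 := by
          rw [hw, mul_one] at h1
          exact pow_le_pow_left₀ (abs_nonneg _) h1 2
      _ = ∑ j, M i j ^ 2 := enorm_sq _
  have hB : BddAbove (Set.range fun w : {w : b → ℝ // enorm w = 1} => enorm (M *ᵥ w.1)) :=
    ⟨Real.sqrt (∑ i, ∑ j, M i j ^ 2), by rintro x ⟨w, rfl⟩; exact hbd w⟩
  exact le_ciSup hB ⟨v, hv⟩

lemma spec_nonneg {a b : Type*} [Fintype a] [Fintype b] (M : Matrix a b ℝ) : 0 ≤ spec M :=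
  Real.iSup_nonneg fun _ => enorm_nonneg' _

lemma dot_mulVec_mulVec {a b c : Type*} [Fintype a] [Fintype b] [Fintype c]
    (A : Matrix a b ℝ) (B : Matrix a c ℝ) (x : b → ℝ) (y : c → ℝ) :
    (A *ᵥ x) ⬝ᵥ (B *ᵥ y) = x ⬝ᵥ ((Aᵀ * B) *ᵥ y) := by
  rw [dotProduct_mulVec, vecMul_mulVec, ← dotProduct_mulVec]

lemma phi_nonneg {M₁ m rs : ℕ} (Ud : Fin m → Matrix (Fin M₁) (Fin rs) ℝ) : 0 ≤ phi Ud :=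
  Real.iSup_nonneg fun j => Real.iSup_nonneg fun t => by
    by_cases h : j ≠ t
    · rw [if_pos h]; exact spec_nonneg _
    · rw [if_neg h]

lemma spec_le_phi {M₁ m rs : ℕ} (Ud : Fin m → Matrix (Fin M₁) (Fin rs) ℝ) {j t : Fin m}
    (h : j ≠ t) : spec ((Ud t)ᵀ * Ud j) ≤ phi Ud := by
  have h1 : spec ((Ud t)ᵀ * Ud j)
      ≤ ⨆ t' : Fin m, if j ≠ t' then spec ((Ud t')ᵀ * Ud j) else 0 := by
    have := le_ciSup (f := fun t' : Fin m => if j ≠ t' then spec ((Ud t')ᵀ * Ud j) else 0)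
      (Set.Finite.bddAbove (Set.finite_range _)) t
    rwa [if_pos h] at this
  exact h1.trans (le_ciSup (f := fun j' : Fin m =>
    ⨆ t' : Fin m, if j' ≠ t' then spec ((Ud t')ᵀ * Ud j') else 0)
    (Set.Finite.bddAbove (Set.finite_range _)) j)

lemma Ddotmax_nonneg {M₁ m n rs : ℕ} (D : Matrix (Fin M₁) (Fin m × Fin n) ℝ)
    (Ud : Fin m → Matrix (Fin M₁) (Fin rs) ℝ) (p : ℝ) : 0 ≤ Ddotmax D Ud p :=
  Real.iSup_nonneg fun _ => Real.iSup_nonneg fun _ =>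
    Finset.sum_nonneg fun _ _ => Real.rpow_nonneg (abs_nonneg _) _

lemma le_Ddotmax {M₁ m n rs : ℕ} (D : Matrix (Fin M₁) (Fin m × Fin n) ℝ)
    (Ud : Fin m → Matrix (Fin M₁) (Fin rs) ℝ) {p : ℝ} (hp : 0 ≤ p) (j : Fin m)
    {u : Fin rs → ℝ} (hu : enorm u = 1) :
    ∑ t : Fin n, |u ⬝ᵥ ((Ud j)ᵀ *ᵥ (Dᵀ (j, t)))| ^ p ≤ Ddotmax D Ud p := by
  have hbd : ∀ w : {w : Fin rs → ℝ // enorm w = 1},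
      (∑ t : Fin n, |w.1 ⬝ᵥ ((Ud j)ᵀ *ᵥ (Dᵀ (j, t)))| ^ p)
        ≤ ∑ t : Fin n, enorm ((Ud j)ᵀ *ᵥ (Dᵀ (j, t))) ^ p := by
    rintro ⟨w, hw⟩
    apply Finset.sum_le_sum
    intro t _
    apply Real.rpow_le_rpow (abs_nonneg _) ?_ hp
    calc |w ⬝ᵥ ((Ud j)ᵀ *ᵥ (Dᵀ (j, t)))|
        ≤ enorm w * enorm ((Ud j)ᵀ *ᵥ (Dᵀ (j, t))) := abs_dot_le _ _
      _ = enorm ((Ud j)ᵀ *ᵥ (Dᵀ (j, t))) := by rw [hw, one_mul]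
  have hB : BddAbove (Set.range fun w : {w : Fin rs → ℝ // enorm w = 1} =>
      ∑ t : Fin n, |w.1 ⬝ᵥ ((Ud j)ᵀ *ᵥ (Dᵀ (j, t)))| ^ p) :=
    ⟨_, by rintro x ⟨w, rfl⟩; exact hbd w⟩
  have h1 := le_ciSup hB ⟨u, hu⟩
  exact h1.trans (le_ciSup (f := fun j' : Fin m =>
    ⨆ w : {w : Fin rs → ℝ // enorm w = 1},
      ∑ t : Fin n, |w.1 ⬝ᵥ ((Ud j')ᵀ *ᵥ (Dᵀ (j', t)))| ^ p)
    (Set.Finite.bddAbove (Set.finite_range _)) j)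

end AuxStmt12

/-- properties of the direction `dᵢ^⊥ = U̇_{kᵢ}βᵢ/‖βᵢ‖₂²`. -/
theorem statement12 (M₁ m n r s : ℕ) (hm : 1 < m) (hn : 0 < n) (hsr : s ≤ r)
    (p : ℝ) (hp : 1 ≤ p)
    (D : Matrix (Fin M₁) (Fin m × Fin n) ℝ)
    (Smat : Matrix (Fin M₁) (Fin s) ℝ)
    (Ud : Fin m → Matrix (Fin M₁) (Fin (r - s)) ℝ)
    (α : Fin m × Fin n → Fin s → ℝ) (β : Fin m × Fin n → Fin (r - s) → ℝ)
    (hSo : Smatᵀ * Smat = 1)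
    (hUo : ∀ j, (Ud j)ᵀ * Ud j = 1)
    (hSU : ∀ j, Smatᵀ * Ud j = 0)
    (hnsub : ∀ i j : Fin m, i ≠ j →
      ¬ (colSpan Smat ⊔ colSpan (Ud i) ≤ colSpan Smat ⊔ colSpan (Ud j)))
    (hcap : ∀ i j : Fin m, i ≠ j →
      (colSpan Smat ⊔ colSpan (Ud i)) ⊓ (colSpan Smat ⊔ colSpan (Ud j)) = colSpan Smat)
    (hcol : ∀ i : Fin m × Fin n, Dᵀ i = Smat.mulVec (α i) + (Ud i.1).mulVec (β i))
    (i : Fin m × Fin n) (hβ : β i ≠ 0) :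
    dotProduct (Dᵀ i) ((enorm (β i) ^ 2)⁻¹ • (Ud i.1).mulVec (β i)) = 1 ∧
    ∑ j ∈ univ.filter (fun j : Fin m × Fin n => j.1 ≠ i.1),
        |dotProduct (Dᵀ j) ((enorm (β i) ^ 2)⁻¹ • (Ud i.1).mulVec (β i))| ^ p
      ≤ ((m : ℝ) - 1) * (1 / enorm (β i) ^ p) * phi Ud ^ p * Ddotmax D Ud p := by
  classical
  set k := i.1 with hk
  set b := β i with hbdef
  have hp0 : (0:ℝ) ≤ p := le_trans zero_le_one hp
  have hpne : p ≠ 0 := by positivity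
  have hnb : 0 < enorm b := enorm_pos hβ
  have hbb : enorm b ^ 2 = b ⬝ᵥ b := by
    rw [enorm_sq]; simp [dotProduct, sq]
  have key : ∀ j : Fin m × Fin n,
      Dᵀ j ⬝ᵥ ((Ud k) *ᵥ b) = β j ⬝ᵥ ((((Ud j.1)ᵀ * Ud k)) *ᵥ b) := by
    intro j
    rw [hcol j, add_dotProduct, dot_mulVec_mulVec, dot_mulVec_mulVec, hSU k,
      Matrix.zero_mulVec, dotProduct_zero, zero_add]
  have hbeta : ∀ j : Fin m × Fin n, (Ud j.1)ᵀ *ᵥ (Dᵀ j) = β j := by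
    intro j
    have hUS : (Ud j.1)ᵀ * Smat = 0 := by
      have h := congrArg Matrix.transpose (hSU j.1)
      simpa [Matrix.transpose_mul] using h
    rw [hcol j, Matrix.mulVec_add, Matrix.mulVec_mulVec, Matrix.mulVec_mulVec, hUo j.1,
      Matrix.one_mulVec, hUS, Matrix.zero_mulVec, zero_add]
  have hdot : ∀ j : Fin m × Fin n,
      Dᵀ j ⬝ᵥ ((enorm b ^ 2)⁻¹ • ((Ud k) *ᵥ b))
        = (enorm b ^ 2)⁻¹ * (β j ⬝ᵥ ((((Ud j.1)ᵀ * Ud k)) *ᵥ b)) := by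
    intro j
    rw [dotProduct_smul, smul_eq_mul, key j]
  constructor
  · rw [hdot i]
    show (enorm b ^ 2)⁻¹ * (b ⬝ᵥ (((Ud k)ᵀ * Ud k) *ᵥ b)) = 1
    rw [hUo k, Matrix.one_mulVec, ← hbb, inv_mul_cancel₀ (by positivity)]
  · have hC0 : 0 ≤ 1 / enorm b ^ p * phi Ud ^ p * Ddotmax D Ud p :=
      mul_nonneg (mul_nonneg (by positivity) (Real.rpow_nonneg (phi_nonneg Ud) p))
        (Ddotmax_nonneg D Ud p)
    have cluster : ∀ j1 : Fin m, j1 ≠ k →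
        (∑ t : Fin n, |Dᵀ (j1, t) ⬝ᵥ ((enorm b ^ 2)⁻¹ • ((Ud k) *ᵥ b))| ^ p)
          ≤ 1 / enorm b ^ p * phi Ud ^ p * Ddotmax D Ud p := by
      intro j1 hj1
      set M := (Ud j1)ᵀ * Ud k with hM
      set v := M *ᵥ b with hv
      by_cases hv0 : v = 0
      · have hz : ∀ t : Fin n,
            |Dᵀ (j1, t) ⬝ᵥ ((enorm b ^ 2)⁻¹ • ((Ud k) *ᵥ b))| ^ p = 0 := by
          intro t
          rw [hdot (j1, t)]
          show |(enorm b ^ 2)⁻¹ * (β (j1, t) ⬝ᵥ v)| ^ p = 0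
          rw [hv0, dotProduct_zero, mul_zero, abs_zero, Real.zero_rpow hpne]
        rw [Finset.sum_congr rfl fun t _ => hz t, Finset.sum_const_zero]
        exact hC0
      · have hnv : 0 < enorm v := enorm_pos hv0
        have hvb : enorm v ≤ phi Ud * enorm b := by
          have hub : enorm ((enorm b)⁻¹ • b) = 1 := by
            rw [enorm_smul (inv_nonneg.mpr hnb.le), inv_mul_cancel₀ hnb.ne']
          have h1 : v = enorm b • (M *ᵥ ((enorm b)⁻¹ • b)) := by
            rw [Matrix.mulVec_smul, smul_smul, mul_inv_cancel₀ hnb.ne', one_smul]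
          rw [h1, enorm_smul hnb.le]
          have h2 : enorm (M *ᵥ ((enorm b)⁻¹ • b)) ≤ spec M := le_spec M hub
          have h3 : spec M ≤ phi Ud := spec_le_phi Ud (Ne.symm hj1)
          calc enorm b * enorm (M *ᵥ ((enorm b)⁻¹ • b))
              ≤ enorm b * phi Ud := mul_le_mul_of_nonneg_left (h2.trans h3) hnb.le
            _ = phi Ud * enorm b := mul_comm _ _
        set u := (enorm v)⁻¹ • v with hu
        have huu : enorm u = 1 := by
          rw [hu, enorm_smul (inv_nonneg.mpr hnv.le), inv_mul_cancel₀ hnv.ne']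
        have hterm : ∀ t : Fin n,
            |Dᵀ (j1, t) ⬝ᵥ ((enorm b ^ 2)⁻¹ • ((Ud k) *ᵥ b))| ^ p
              = ((enorm b ^ 2)⁻¹ * enorm v) ^ p * |u ⬝ᵥ β (j1, t)| ^ p := by
          intro t
          rw [hdot (j1, t)]
          have hvu : v = enorm v • u := by
            rw [hu, smul_smul, mul_inv_cancel₀ hnv.ne', one_smul]
          have h4 : β (j1, t) ⬝ᵥ v = enorm v * (u ⬝ᵥ β (j1, t)) := by
            calc β (j1, t) ⬝ᵥ v = β (j1, t) ⬝ᵥ (enorm v • u) := by rw [← hvu]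
              _ = enorm v * (β (j1, t) ⬝ᵥ u) := by rw [dotProduct_smul, smul_eq_mul]
              _ = enorm v * (u ⬝ᵥ β (j1, t)) := by rw [dotProduct_comm]
          show |(enorm b ^ 2)⁻¹ * (β (j1, t) ⬝ᵥ v)| ^ p = _
          rw [h4, show (enorm b ^ 2)⁻¹ * (enorm v * (u ⬝ᵥ β (j1, t)))
              = ((enorm b ^ 2)⁻¹ * enorm v) * (u ⬝ᵥ β (j1, t)) from by ring,
            abs_mul, Real.mul_rpow (abs_nonneg _) (abs_nonneg _),
            abs_of_nonneg (by positivity : (0:ℝ) ≤ (enorm b ^ 2)⁻¹ * enorm v)]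
        have hsum : (∑ t : Fin n, |u ⬝ᵥ β (j1, t)| ^ p) ≤ Ddotmax D Ud p := by
          have := le_Ddotmax D Ud hp0 j1 huu
          refine le_trans (le_of_eq ?_) this
          refine Finset.sum_congr rfl fun t _ => ?_
          rw [hbeta (j1, t)]
        have hcoef : ((enorm b ^ 2)⁻¹ * enorm v) ^ p ≤ 1 / enorm b ^ p * phi Ud ^ p := by
          have h5 : (enorm b ^ 2)⁻¹ * enorm v ≤ phi Ud * (enorm b)⁻¹ := by
            calc (enorm b ^ 2)⁻¹ * enorm v
                ≤ (enorm b ^ 2)⁻¹ * (phi Ud * enorm b) :=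
                  mul_le_mul_of_nonneg_left hvb (by positivity)
              _ = phi Ud * (enorm b)⁻¹ := by
                  field_simp
          calc ((enorm b ^ 2)⁻¹ * enorm v) ^ p
              ≤ (phi Ud * (enorm b)⁻¹) ^ p :=
                Real.rpow_le_rpow (by positivity) h5 hp0
            _ = phi Ud ^ p * ((enorm b)⁻¹) ^ p :=
                Real.mul_rpow (phi_nonneg Ud) (inv_nonneg.mpr hnb.le)
            _ = 1 / enorm b ^ p * phi Ud ^ p := by
                rw [Real.inv_rpow hnb.le, one_div, mul_comm]
        calc (∑ t : Fin n, |Dᵀ (j1, t) ⬝ᵥ ((enorm b ^ 2)⁻¹ • ((Ud k) *ᵥ b))| ^ p)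
            = ((enorm b ^ 2)⁻¹ * enorm v) ^ p * ∑ t : Fin n, |u ⬝ᵥ β (j1, t)| ^ p := by
              rw [Finset.mul_sum]
              exact Finset.sum_congr rfl fun t _ => hterm t
          _ ≤ (1 / enorm b ^ p * phi Ud ^ p) * Ddotmax D Ud p := by
              apply mul_le_mul hcoef hsum
              · exact Finset.sum_nonneg fun t _ => Real.rpow_nonneg (abs_nonneg _) _
              · exact mul_nonneg (by positivity) (Real.rpow_nonneg (phi_nonneg Ud) p)
    have hfil : univ.filter (fun j : Fin m × Fin n => j.1 ≠ k)
        = (univ.filter fun j1 : Fin m => j1 ≠ k) ×ˢ (univ : Finset (Fin n)) := by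
      ext ⟨a, c⟩; simp
    rw [hfil, Finset.sum_product]
    have hcard : (univ.filter fun j1 : Fin m => j1 ≠ k).card = m - 1 := by
      rw [Finset.filter_ne', Finset.card_erase_of_mem (mem_univ _), Finset.card_univ,
        Fintype.card_fin]
    calc (∑ j1 ∈ univ.filter fun j1 : Fin m => j1 ≠ k, ∑ t : Fin n,
          |Dᵀ (j1, t) ⬝ᵥ ((enorm b ^ 2)⁻¹ • ((Ud k) *ᵥ b))| ^ p)
        ≤ (univ.filter fun j1 : Fin m => j1 ≠ k).card
            • (1 / enorm b ^ p * phi Ud ^ p * Ddotmax D Ud p) :=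
          Finset.sum_le_card_nsmul _ _ _ fun j1 hj1 =>
            cluster j1 (by simpa using hj1)
      _ = ((m : ℝ) - 1) * (1 / enorm b ^ p * phi Ud ^ p * Ddotmax D Ud p) := by
          rw [hcard, nsmul_eq_mul, Nat.cast_sub hm.le, Nat.cast_one]
      _ = ((m : ℝ) - 1) * (1 / enorm b ^ p) * phi Ud ^ p * Ddotmax D Ud p := by ring


end Paper
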